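/- arXiv:1109.1348 — 5 statements merged into one kernel-verified Lean document; each statement's English description precedes it below -/
import Mathlib

section
/- Let f : ℕ → ℂ satisfy |f(n)| ≤ 1 for all n ≥ 1, let y ≥ 1 be a real number, and let δ > 0. Then |∑_{n ≤ y} f(n)/n^{1+δ}| ≤ max_{1 ≤ N ≤ y} |∑_{n ≤ N} f(n)/n|. -/
/-!
Write `f n / n ^ (1 + δ) = n ^ (-δ) • (f n / n)`. The weights `n ^ (-δ)` are positive,
nonincreasing and equal to `1` at `n = 1`, so Abel summation bounds the weighted sum by the
largest partial sum of `f n / n`; the partial sum up to `m ≤ y` is the term `N = m` of the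
supremum.
-/

open Finset

theorem norm_sum_range_smul_le_of_antitone {E : Type*} [SeminormedAddCommGroup E]
    [NormedSpace ℝ E] {a : ℕ → E} {w : ℕ → ℝ} {M : ℝ} {K : ℕ} (hw : Antitone w)
    (hw0 : ∀ n, 0 ≤ w n) (ha : ∀ m ≤ K, ‖∑ i ∈ range m, a i‖ ≤ M) :
    ‖∑ i ∈ range K, w i • a i‖ ≤ w 0 * M := by
  have hterm : ∀ i ∈ range (K - 1),
      ‖(w (i + 1) - w i) • ∑ j ∈ range (i + 1), a j‖ ≤ (w i - w (i + 1)) * M := by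
    intro i hi
    rw [norm_smul, Real.norm_of_nonpos (sub_nonpos.2 (hw i.le_succ)), neg_sub]
    exact mul_le_mul_of_nonneg_left (ha _ (by grind)) (sub_nonneg.2 (hw i.le_succ))
  calc ‖∑ i ∈ range K, w i • a i‖
      = ‖w (K - 1) • ∑ i ∈ range K, a i -
          ∑ i ∈ range (K - 1), (w (i + 1) - w i) • ∑ j ∈ range (i + 1), a j‖ := by
        rw [sum_range_by_parts]
    _ ≤ w (K - 1) * M + ∑ i ∈ range (K - 1), (w i - w (i + 1)) * M := by
        refine (norm_sub_le _ _).trans (add_le_add ?_ ((norm_sum_le _ _).trans (sum_le_sum hterm)))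
        rw [norm_smul, Real.norm_of_nonneg (hw0 _)]
        exact mul_le_mul_of_nonneg_left (ha K le_rfl) (hw0 _)
    _ = w 0 * M := by rw [← sum_mul, sum_range_sub' w]; ring

theorem sum_Icc_one_eq_sum_range {M : Type*} [AddCommMonoid M] (g : ℕ → M) (K : ℕ) :
    ∑ n ∈ Icc 1 K, g n = ∑ i ∈ range K, g (i + 1) := by
  rw [range_eq_Ico, sum_Ico_add', ← Ico_add_one_right_eq_Icc, zero_add]

theorem div_ofReal_rpow_one_add_eq_smul (z : ℂ) {n : ℕ} (hn : 0 < n) (δ : ℝ) :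
    z / (((n : ℝ) ^ (1 + δ) : ℝ) : ℂ) = (n : ℝ) ^ (-δ) • (z / n) := by
  have hn' : (0 : ℝ) < n := Nat.cast_pos.2 hn
  rw [Real.rpow_add hn', Real.rpow_one, Real.rpow_neg hn'.le, Complex.real_smul]
  have : (((n : ℝ) ^ δ : ℝ) : ℂ) ≠ 0 := Complex.ofReal_ne_zero.2 (Real.rpow_pos_of_pos hn' δ).ne'
  push_cast
  field_simp

theorem antitone_natCast_add_one_rpow_neg {δ : ℝ} (hδ : 0 ≤ δ) :
    Antitone fun i : ℕ => ((i + 1 : ℕ) : ℝ) ^ (-δ) := fun _ _ hij =>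
  Real.rpow_le_rpow_of_nonpos (by positivity) (by gcongr) (neg_nonpos.2 hδ)

theorem le_iSup_Icc_floor {g : ℕ → ℝ} (hg : ∀ k, 0 ≤ g k) {y : ℝ} {m : ℕ} (hm : 1 ≤ m)
    (hmy : m ≤ ⌊y⌋₊) : g m ≤ ⨆ N ∈ Set.Icc (1 : ℝ) y, g ⌊N⌋₊ := by
  have hbdd : BddAbove (Set.range fun N : ℝ => ⨆ _ : N ∈ Set.Icc (1 : ℝ) y, g ⌊N⌋₊) := by
    refine ⟨∑ k ∈ range (⌊y⌋₊ + 1), g k, ?_⟩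
    rintro _ ⟨N, rfl⟩
    refine Real.iSup_le (fun hN => single_le_sum (fun k _ => hg k) ?_) (sum_nonneg fun k _ => hg k)
    exact mem_range.2 (Nat.lt_succ_of_le (Nat.floor_le_floor hN.2))
  have hmem : (m : ℝ) ∈ Set.Icc (1 : ℝ) y :=
    ⟨Nat.one_le_cast.2 hm, (Nat.le_floor_iff' (by omega)).1 hmy⟩
  calc g m = ⨆ _ : (m : ℝ) ∈ Set.Icc (1 : ℝ) y, g ⌊(m : ℝ)⌋₊ := by
        rw [ciSup_pos hmem, Nat.floor_natCast]
    _ ≤ _ := le_ciSup hbdd (m : ℝ)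

theorem smoothed_sum_le_max_partial_sum_general (f : ℕ → ℂ) (y : ℝ) (δ : ℝ) (hδ : 0 < δ) :
    ‖∑ n ∈ Finset.Icc 1 ⌊y⌋₊, f n / (((n : ℝ) ^ (1 + δ) : ℝ) : ℂ)‖ ≤
      ⨆ N ∈ Set.Icc (1 : ℝ) y, ‖∑ n ∈ Finset.Icc 1 ⌊N⌋₊, f n / (n : ℂ)‖ := by
  have hpartial : ∀ m ≤ ⌊y⌋₊, ‖∑ i ∈ range m, f (i + 1) / ((i + 1 : ℕ) : ℂ)‖ ≤
      ⨆ N ∈ Set.Icc (1 : ℝ) y, ‖∑ n ∈ Icc 1 ⌊N⌋₊, f n / (n : ℂ)‖ := by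
    intro m hm
    rw [← sum_Icc_one_eq_sum_range (fun n => f n / (n : ℂ))]
    rcases Nat.eq_zero_or_pos m with rfl | hm1
    · simpa using Real.iSup_nonneg fun N => Real.iSup_nonneg fun _ => norm_nonneg _
    · exact le_iSup_Icc_floor (g := fun k => ‖∑ n ∈ Icc 1 k, f n / (n : ℂ)‖)
        (fun _ => norm_nonneg _) hm1 hm
  calc _ = ‖∑ i ∈ range ⌊y⌋₊, ((i + 1 : ℕ) : ℝ) ^ (-δ) • (f (i + 1) / ((i + 1 : ℕ) : ℂ))‖ := by
        rw [sum_Icc_one_eq_sum_range]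
        simp_rw [div_ofReal_rpow_one_add_eq_smul _ (Nat.succ_pos _)]
    _ ≤ ((0 + 1 : ℕ) : ℝ) ^ (-δ) * _ := norm_sum_range_smul_le_of_antitone
        (antitone_natCast_add_one_rpow_neg hδ.le) (fun _ => by positivity) hpartial
    _ = _ := by simp

theorem smoothed_sum_le_max_partial_sum (f : ℕ → ℂ)
    (hf : ∀ n : ℕ, 1 ≤ n → ‖f n‖ ≤ 1) (y : ℝ) (hy : 1 ≤ y) (δ : ℝ) (hδ : 0 < δ) :
    ‖∑ n ∈ Finset.Icc 1 ⌊y⌋₊, f n / (((n : ℝ) ^ (1 + δ) : ℝ) : ℂ)‖ ≤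
      ⨆ N ∈ Set.Icc (1 : ℝ) y, ‖∑ n ∈ Finset.Icc 1 ⌊N⌋₊, f n / (n : ℂ)‖ :=
  smoothed_sum_le_max_partial_sum_general f y δ hδ
end

section
/- There exists an absolute constant C such that the following holds. Let f : ℕ → ℂ be a completely multiplicative function with |f(n)| ≤ 1 for all n ≥ 1, let 0 < δ ≤ 1/2, and let F(1+δ) := ∑_{n=1}^{∞} f(n)/n^{1+δ}. Then exp(∑_{p ≤ e^{1/δ}} Re f(p)/p − C) ≤ |F(1+δ)| ≤ exp(∑_{p ≤ e^{1/δ}} Re f(p)/p + C), where the sums run over primes p ≤ e^{1/δ}. -/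
/-!
By the Euler product, `log |F(1+δ)| = ∑_p Re (-log (1 - f(p) p^{-1-δ}))`, and each term differs
from `Re f(p) p^{-1-δ}` by at most `p^{-2}`. For `p ≤ x = e^{1/δ}`, replacing `p^{-1-δ}` by `p^{-1}`
costs at most `δ log p / p`, and `δ ∑_{p ≤ x} log p / p ≤ δ (4 log x + 4) = O(1)` by Chebyshev's
bound `θ(y) ≤ y log 4`. For `p > x`, the primes with `⌊δ log p⌋ = j ≥ 1` contribute at most
`e^{-j} (δ / j) ∑_{p ≤ e^{(j+1)/δ}} log p / p = O(e^{-j})`, so the tail is `O(1)` as well.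
-/

open Finset Real
open scoped Chebyshev

theorem sum_primes_log_div_Ioc_half_le (N : ℕ) :
    ∑ p ∈ Ioc (N / 2) N with p.Prime, log p / p ≤ 4 * log 2 := by
  rcases N.eq_zero_or_pos with rfl | hN
  · simp [log_nonneg one_le_two]
  have hN' : (0 : ℝ) < N := by exact_mod_cast hN
  calc ∑ p ∈ Ioc (N / 2) N with p.Prime, log p / p
      ≤ ∑ p ∈ Ioc (N / 2) N with p.Prime, log p * (2 / N) := by
        refine sum_le_sum fun p hp => ?_
        have hp : N / 2 < p := (mem_Ioc.1 (mem_filter.1 hp).1).1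
        have hp' : (N : ℝ) < 2 * p := by exact_mod_cast (by omega : N < 2 * p)
        rw [div_eq_mul_inv]
        gcongr
        rw [inv_le_comm₀ (by linarith) (by positivity), inv_div]
        linarith
    _ ≤ θ N * (2 / N) := by
        rw [← sum_mul, Chebyshev.theta, Nat.floor_natCast]
        gcongr
        exact Nat.zero_le _
    _ ≤ log 4 * N * (2 / N) := by
        gcongr
        exact Chebyshev.theta_le_log4_mul_x N.cast_nonneg
    _ = 4 * log 2 := by
        rw [show (4 : ℝ) = 2 ^ 2 by norm_num, log_pow]
        field_simp
        norm_num

theorem sum_primes_log_div_le (N : ℕ) :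
    ∑ p ∈ Ioc 0 N with p.Prime, log p / p ≤ 4 * log N + 4 := by
  induction N using Nat.strong_induction_on with
  | _ N ih =>
  rcases lt_or_ge N 2 with hN | hN
  · interval_cases N <;> simp [filter_singleton, Nat.not_prime_one]
  have hsplit : ∑ p ∈ Ioc 0 N with p.Prime, log p / p =
      ∑ p ∈ Ioc 0 (N / 2) with p.Prime, log p / p +
        ∑ p ∈ Ioc (N / 2) N with p.Prime, log p / p := by
    simp only [sum_filter]
    exact (sum_Ioc_consecutive _ (Nat.zero_le _) (Nat.div_le_self N 2)).symm
  have hlog : log (N / 2 : ℕ) ≤ log N - log 2 := by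
    rw [← log_div (by positivity) two_ne_zero]
    refine log_le_log (by exact_mod_cast (by omega : 0 < N / 2)) ?_
    rw [le_div_iff₀ two_pos]
    exact_mod_cast Nat.div_mul_le_self N 2
  linarith [ih (N / 2) (by omega), sum_primes_log_div_Ioc_half_le N]

theorem log_natFloor_exp_le {t : ℝ} (ht : 0 ≤ t) : log ⌊exp t⌋₊ ≤ t := by
  have h1 : 1 ≤ ⌊exp t⌋₊ := Nat.le_floor (by simpa using one_le_exp ht)
  calc log ⌊exp t⌋₊ ≤ log (exp t) :=
        log_le_log (by exact_mod_cast h1) (Nat.floor_le (exp_pos t).le)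
    _ = t := log_exp t

theorem sum_primes_log_div_le_exp {t : ℝ} (ht : 0 ≤ t) :
    ∑ p ∈ Ioc 0 ⌊exp t⌋₊ with p.Prime, log p / p ≤ 4 * t + 4 := by
  linarith [sum_primes_log_div_le ⌊exp t⌋₊, log_natFloor_exp_le ht]

theorem inv_rpow_one_add_eq {x : ℝ} (hx : 0 < x) (δ : ℝ) :
    (x ^ (1 + δ))⁻¹ = exp (-(δ * log x)) * x⁻¹ := by
  rw [rpow_add hx, rpow_one, rpow_def_of_pos hx, mul_inv, exp_neg, mul_comm δ, mul_comm]

theorem inv_rpow_one_add_le {x δ t : ℝ} (hx : 0 < x) (ht : 0 < t) (htx : t ≤ δ * log x) :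
    (x ^ (1 + δ))⁻¹ ≤ exp (-t) * (δ / t) * (log x / x) := by
  calc (x ^ (1 + δ))⁻¹ = exp (-(δ * log x)) * x⁻¹ := inv_rpow_one_add_eq hx δ
    _ ≤ exp (-t) * ((δ * log x / t) * x⁻¹) :=
        mul_le_mul (exp_le_exp.2 (by linarith))
          (le_mul_of_one_le_left (by positivity) ((one_le_div ht).2 htx)) (by positivity)
          (exp_pos _).le
    _ = exp (-t) * (δ / t) * (log x / x) := by ring

theorem abs_inv_rpow_one_add_sub_inv_le {x δ : ℝ} (hx : 1 ≤ x) (hδ : 0 ≤ δ) :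
    |(x ^ (1 + δ))⁻¹ - x⁻¹| ≤ δ * (log x / x) := by
  have hx0 : 0 < x := by linarith
  have hδx : 0 ≤ δ * log x := mul_nonneg hδ (log_nonneg hx)
  rw [inv_rpow_one_add_eq hx0, ← sub_one_mul, abs_mul, abs_of_nonneg (inv_nonneg.2 hx0.le),
    abs_of_nonpos (by linarith [exp_le_one_iff.2 (neg_nonpos.2 hδx)]), div_eq_mul_inv, ← mul_assoc]
  gcongr
  linarith [add_one_le_exp (-(δ * log x))]

theorem exp_neg_natCast_le_half_pow (j : ℕ) : exp (-j) ≤ (1 / 2 : ℝ) ^ j := by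
  rw [exp_neg, one_div, inv_pow, ← exp_one_pow]
  exact inv_anti₀ (by positivity) (pow_le_pow_left₀ zero_le_two (by linarith [add_one_le_exp 1]) j)

theorem sum_inv_sq_le_two (s : Finset ℕ) : ∑ n ∈ s, ((n : ℝ) ^ 2)⁻¹ ≤ 2 := by
  have h := sum_le_hasSum s (fun n _ => by positivity) hasSum_zeta_two
  simp only [one_div] at h
  nlinarith [pi_lt_d2, pi_pos]

theorem sum_primes_inv_rpow_fiber_le {δ : ℝ} (hδ : 0 < δ) (hδ2 : δ ≤ 1 / 2) (s : Finset ℕ)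
    (hs : ∀ p ∈ s, p.Prime) {j : ℕ} (hj : 1 ≤ j) :
    ∑ p ∈ s with ⌊δ * log (p : ℕ)⌋₊ = j, ((p : ℝ) ^ (1 + δ))⁻¹ ≤ 10 * (1 / 2) ^ j := by
  have hj' : (1 : ℝ) ≤ j := by exact_mod_cast hj
  have hfiber : ∀ p ∈ {p ∈ s | ⌊δ * log (p : ℕ)⌋₊ = j},
      p.Prime ∧ (j : ℝ) ≤ δ * log p ∧ δ * log p < j + 1 := by
    intro p hp
    obtain ⟨hps, rfl⟩ := mem_filter.1 hp
    have hδp : 0 ≤ δ * log p := mul_nonneg hδ.le (log_natCast_nonneg p)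
    exact ⟨hs p hps, Nat.floor_le hδp, Nat.lt_floor_add_one _⟩
  have hsub : {p ∈ s | ⌊δ * log (p : ℕ)⌋₊ = j} ⊆ (Ioc 0 ⌊exp ((j + 1) / δ)⌋₊).filter Nat.Prime := by
    intro p hp
    obtain ⟨hpr, -, hlt⟩ := hfiber p hp
    have hp0 : (0 : ℝ) < p := by exact_mod_cast hpr.pos
    refine mem_filter.2 ⟨mem_Ioc.2 ⟨hpr.pos, Nat.le_floor ?_⟩, hpr⟩
    rw [← exp_log hp0]
    exact exp_le_exp.2 ((le_div_iff₀ hδ).2 (by linarith))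
  calc ∑ p ∈ s with ⌊δ * log (p : ℕ)⌋₊ = j, ((p : ℝ) ^ (1 + δ))⁻¹
      ≤ ∑ p ∈ s with ⌊δ * log (p : ℕ)⌋₊ = j, exp (-j) * (δ / j) * (log p / p) :=
        sum_le_sum fun p hp => inv_rpow_one_add_le (by exact_mod_cast (hfiber p hp).1.pos)
          (by positivity) (hfiber p hp).2.1
    _ = exp (-j) * (δ / j) * ∑ p ∈ s with ⌊δ * log (p : ℕ)⌋₊ = j, log p / p := by rw [mul_sum]
    _ ≤ exp (-j) * (δ / j) * (4 * ((j + 1) / δ) + 4) := by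
        gcongr
        refine (sum_le_sum_of_subset_of_nonneg hsub fun p _ _ => ?_).trans
          (sum_primes_log_div_le_exp (by positivity))
        exact div_nonneg (log_natCast_nonneg p) p.cast_nonneg
    _ = exp (-j) * (4 + 4 / j + 4 * δ / j) := by field_simp
    _ ≤ (1 / 2) ^ j * 10 := by
        have : 4 / (j : ℝ) ≤ 4 := div_le_self (by norm_num) hj'
        have : 4 * δ / (j : ℝ) ≤ 4 * δ := div_le_self (by positivity) hj'
        exact mul_le_mul (exp_neg_natCast_le_half_pow j) (by linarith) (by positivity)
          (by positivity)
    _ = 10 * (1 / 2) ^ j := mul_comm _ _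

theorem sum_primes_inv_rpow_le {δ : ℝ} (hδ : 0 < δ) (hδ2 : δ ≤ 1 / 2) (s : Finset ℕ)
    (hs : ∀ p ∈ s, p.Prime ∧ 1 ≤ δ * log p) : ∑ p ∈ s, ((p : ℝ) ^ (1 + δ))⁻¹ ≤ 20 := by
  rw [← sum_fiberwise_of_maps_to fun p hp => mem_image_of_mem (fun p : ℕ => ⌊δ * log p⌋₊) hp]
  calc _ ≤ ∑ j ∈ s.image (fun p : ℕ => ⌊δ * log p⌋₊), 10 * (1 / 2 : ℝ) ^ j := by
        refine sum_le_sum fun j hj => ?_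
        obtain ⟨p, hp, rfl⟩ := mem_image.1 hj
        exact sum_primes_inv_rpow_fiber_le hδ hδ2 s (fun p hp => (hs p hp).1)
          (Nat.le_floor (by exact_mod_cast (hs p hp).2))
    _ ≤ 10 * ∑' j : ℕ, (1 / 2 : ℝ) ^ j := by
        rw [← mul_sum]
        gcongr
        exact summable_geometric_two.sum_le_tsum _ fun _ _ => by positivity
    _ = 20 := by rw [tsum_geometric_two]; norm_num

theorem Complex.abs_re_neg_log_one_sub_sub_re_le {z : ℂ} (hz : ‖z‖ ≤ 1 / 2) :
    |(-log (1 - z)).re - z.re| ≤ ‖z‖ ^ 2 := by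
  have hz1 : ‖-z‖ < 1 := by rw [norm_neg]; linarith
  have hinv : (1 - ‖z‖)⁻¹ ≤ 2 := by
    rw [inv_le_comm₀ (by linarith) two_pos]; linarith
  calc |(-log (1 - z)).re - z.re| = |(log (1 + -z) - -z).re| := by
        rw [← abs_neg, ← sub_eq_add_neg, Complex.sub_re, Complex.neg_re, Complex.neg_re]
        ring_nf
    _ ≤ ‖log (1 + -z) - -z‖ := abs_re_le_norm _
    _ ≤ ‖z‖ ^ 2 * (1 - ‖z‖)⁻¹ / 2 := by simpa using norm_log_one_add_sub_self_le hz1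
    _ ≤ ‖z‖ ^ 2 := by nlinarith [sq_nonneg ‖z‖]

-- `s ≠ 0` is what sends `0` to `0`, as `(0 : ℝ) ^ (0 : ℝ) = 1`.
noncomputable def MonoidHom.divRpow (f : ℕ →* ℂ) (s : ℝ) (hs : s ≠ 0) : ℕ →*₀ ℂ where
  toFun n := f n / ((n : ℝ) ^ s : ℝ)
  map_zero' := by simp [zero_rpow hs]
  map_one' := by simp
  map_mul' m n := by
    simp only [map_mul, Nat.cast_mul, mul_rpow m.cast_nonneg n.cast_nonneg, Complex.ofReal_mul]
    ring

theorem MonoidHom.divRpow_apply (f : ℕ →* ℂ) {s : ℝ} (hs : s ≠ 0) (n : ℕ) :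
    f.divRpow s hs n = f n / ((n : ℝ) ^ s : ℝ) := rfl

theorem MonoidHom.norm_divRpow_le (f : ℕ →* ℂ) (hf : ∀ n, 1 ≤ n → ‖f n‖ ≤ 1) {s : ℝ} (hs : 0 < s)
    (n : ℕ) : ‖f.divRpow s hs.ne' n‖ ≤ ((n : ℝ) ^ s)⁻¹ := by
  rcases n.eq_zero_or_pos with rfl | hn
  · simp [zero_rpow hs.ne']
  rw [divRpow_apply, norm_div, Complex.norm_real, Real.norm_of_nonneg (by positivity),
    div_eq_mul_inv]
  exact mul_le_of_le_one_left (by positivity) (hf n hn)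

theorem MonoidHom.summable_norm_divRpow (f : ℕ →* ℂ) (hf : ∀ n, 1 ≤ n → ‖f n‖ ≤ 1) {s : ℝ}
    (hs : 1 < s) : Summable (‖f.divRpow s (by positivity) ·‖) :=
  (summable_nat_rpow_inv.2 hs).of_nonneg_of_le (fun _ => norm_nonneg _)
    (f.norm_divRpow_le hf (by positivity))

theorem norm_tsum_eq_exp_tsum_re_neg_log {G : ℕ →*₀ ℂ} (hG : Summable (‖G ·‖)) :
    ‖∑' n, G n‖ = exp (∑' p : Nat.Primes, (-Complex.log (1 - G p)).re) := by
  have hlog : Summable fun p : Nat.Primes => -Complex.log (1 - G p) :=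
    hG.of_norm.clog_one_sub.neg.subtype _
  rw [← EulerProduct.exp_tsum_primes_log_eq_tsum hG, Complex.norm_exp, Complex.re_tsum hlog]

theorem hasSum_primes_ite_le (g : ℕ → ℝ) (N : ℕ) :
    HasSum (fun p : Nat.Primes => if (p : ℕ) ≤ N then g p else 0)
      (∑ p ∈ Icc 1 N with p.Prime, g p) := by
  have hzero : ∀ p ∉ (Icc 1 N).subtype Nat.Prime, (if (p : ℕ) ≤ N then g p else 0) = 0 :=
    fun p hp => if_neg fun hpN => hp (mem_subtype.2 (mem_Icc.2 ⟨p.2.one_le, hpN⟩))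
  have hsum : HasSum (fun p : Nat.Primes => if (p : ℕ) ≤ N then g p else 0)
      (∑ p ∈ (Icc 1 N).subtype Nat.Prime, if (p : ℕ) ≤ N then g p else 0) :=
    hasSum_sum_of_ne_finset_zero hzero
  convert hsum using 1
  rw [sum_subtype_eq_sum_filter (fun p => if p ≤ N then g p else 0)]
  exact sum_congr rfl fun p hp => (if_pos (mem_Icc.1 (mem_filter.1 hp).1).2).symm

theorem abs_tsum_sub_le_of_sum_le {ι : Type*} {r c b : ι → ℝ} {S B : ℝ} (hr : Summable r)
    (hc : HasSum c S) (hrc : ∀ i, |r i - c i| ≤ b i) (hB : ∀ s : Finset ι, ∑ i ∈ s, b i ≤ B) :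
    |∑' i, r i - S| ≤ B := by
  have hrc' : Summable fun i => r i - c i := hr.sub hc.summable
  rw [← hc.tsum_eq, ← hr.tsum_sub hc.summable]
  calc |∑' i, (r i - c i)| ≤ ∑' i, |r i - c i| := by
        have h := norm_tsum_le_tsum_norm (f := fun i => r i - c i)
          (by simpa only [Real.norm_eq_abs] using hrc'.abs)
        simpa only [Real.norm_eq_abs] using h
    _ ≤ B := tsum_le_of_sum_le' (by simpa only [sum_empty] using hB ∅) fun s =>
        (sum_le_sum fun i _ => hrc i).trans (hB s)

theorem abs_re_neg_log_one_sub_div_rpow_sub_le {a : ℂ} (ha : ‖a‖ ≤ 1) {p : ℕ} (hp : p.Prime)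
    {δ : ℝ} (hδ : 0 ≤ δ) (N : ℕ) :
    |(-Complex.log (1 - a / ((p : ℝ) ^ (1 + δ) : ℝ))).re - (if p ≤ N then a.re / p else 0)| ≤
      ((p : ℝ) ^ 2)⁻¹ + if p ≤ N then δ * (log p / p) else ((p : ℝ) ^ (1 + δ))⁻¹ := by
  set z : ℂ := a / ((p : ℝ) ^ (1 + δ) : ℝ)
  have hp1 : (1 : ℝ) ≤ p := by exact_mod_cast hp.one_le
  have hp2 : (2 : ℝ) ≤ p := by exact_mod_cast hp.two_le
  have hz : ‖z‖ ≤ ((p : ℝ) ^ (1 + δ))⁻¹ := by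
    rw [norm_div, Complex.norm_real, Real.norm_of_nonneg (by positivity), div_eq_mul_inv]
    exact mul_le_of_le_one_left (by positivity) ha
  have hzp : ‖z‖ ≤ (p : ℝ)⁻¹ := hz.trans (inv_anti₀ (by positivity)
    (by simpa using rpow_le_rpow_of_exponent_le hp1 (by linarith : (1 : ℝ) ≤ 1 + δ)))
  have hzhalf : ‖z‖ ≤ 1 / 2 := hzp.trans (by rw [one_div]; exact inv_anti₀ two_pos hp2)
  have hlog : |(-Complex.log (1 - z)).re - z.re| ≤ ((p : ℝ) ^ 2)⁻¹ :=
    (Complex.abs_re_neg_log_one_sub_sub_re_le hzhalf).trans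
      (by rw [← inv_pow]; exact pow_le_pow_left₀ (norm_nonneg _) hzp 2)
  have hre : |z.re - if p ≤ N then a.re / p else 0| ≤
      if p ≤ N then δ * (log p / p) else ((p : ℝ) ^ (1 + δ))⁻¹ := by
    split_ifs
    · rw [Complex.div_ofReal_re, div_eq_mul_inv, div_eq_mul_inv, ← mul_sub, abs_mul]
      exact mul_le_of_le_one_left (abs_nonneg _) ((Complex.abs_re_le_norm a).trans ha)
        |>.trans (abs_inv_rpow_one_add_sub_inv_le hp1 hδ)
    · rw [sub_zero]
      exact (Complex.abs_re_le_norm z).trans hz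
  exact (abs_sub_le _ _ _).trans (add_le_add hlog hre)

theorem sum_primes_inv_sq_add_ite_le {δ : ℝ} (hδ : 0 < δ) (hδ2 : δ ≤ 1 / 2) (s : Finset ℕ)
    (hs : ∀ p ∈ s, p.Prime) :
    ∑ p ∈ s, (((p : ℝ) ^ 2)⁻¹ +
      if p ≤ ⌊exp (1 / δ)⌋₊ then δ * (log p / p) else ((p : ℝ) ^ (1 + δ))⁻¹) ≤ 28 := by
  set N := ⌊exp (1 / δ)⌋₊
  have hsmall : ∑ p ∈ s with p ≤ N, δ * (log p / p) ≤ 6 := by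
    have hsub : {p ∈ s | p ≤ N} ⊆ (Ioc 0 N).filter Nat.Prime := fun p hp => by
      obtain ⟨hps, hpN⟩ := mem_filter.1 hp
      exact mem_filter.2 ⟨mem_Ioc.2 ⟨(hs p hps).pos, hpN⟩, hs p hps⟩
    have hcheb := (sum_le_sum_of_subset_of_nonneg hsub fun p _ _ =>
      div_nonneg (log_natCast_nonneg p) p.cast_nonneg).trans
      (sum_primes_log_div_le_exp (one_div_pos.2 hδ).le)
    rw [← mul_sum]
    calc δ * ∑ p ∈ s with p ≤ N, log p / p ≤ δ * (4 * (1 / δ) + 4) := by gcongr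
      _ = 4 + 4 * δ := by field_simp
      _ ≤ 6 := by linarith
  have htail : ∑ p ∈ s with ¬p ≤ N, ((p : ℝ) ^ (1 + δ))⁻¹ ≤ 20 := by
    refine sum_primes_inv_rpow_le hδ hδ2 _ fun p hp => ?_
    obtain ⟨hps, hpN⟩ := mem_filter.1 hp
    have hp0 : (0 : ℝ) < p := by exact_mod_cast (hs p hps).pos
    have hexp : exp (1 / δ) < p :=
      (Nat.lt_floor_add_one _).trans_le (by exact_mod_cast Nat.succ_le_of_lt (not_le.1 hpN))
    have hlog : 1 / δ < log p := (lt_log_iff_exp_lt hp0).2 hexp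
    rw [div_lt_iff₀ hδ, mul_comm] at hlog
    exact ⟨hs p hps, hlog.le⟩
  rw [sum_add_distrib, sum_ite]
  linarith [sum_inv_sq_le_two s]

theorem abs_tsum_re_neg_log_sub_sum_le (f : ℕ →* ℂ) (hf : ∀ n, 1 ≤ n → ‖f n‖ ≤ 1) {δ : ℝ}
    (hδ : 0 < δ) (hδ2 : δ ≤ 1 / 2) :
    |∑' p : Nat.Primes, (-Complex.log (1 - f.divRpow (1 + δ) (by positivity) p)).re -
      ∑ p ∈ Icc 1 ⌊exp (1 / δ)⌋₊ with p.Prime, (f p).re / p| ≤ 28 := by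
  have hG := f.summable_norm_divRpow hf (by linarith : 1 < 1 + δ)
  have hlog : Summable fun p : Nat.Primes => -Complex.log (1 - f.divRpow (1 + δ) _ p) :=
    hG.of_norm.clog_one_sub.neg.subtype _
  refine abs_tsum_sub_le_of_sum_le (Complex.reCLM.summable hlog)
    (hasSum_primes_ite_le _ _)
    (fun p => abs_re_neg_log_one_sub_div_rpow_sub_le (hf p p.2.one_le) p.2 hδ.le _) fun s => ?_
  have := sum_primes_inv_sq_add_ite_le hδ hδ2 (s.map ⟨(↑), Nat.Primes.coe_nat_injective⟩)
    fun p hp => by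
      obtain ⟨q, -, rfl⟩ := mem_map.1 hp
      exact q.2
  rwa [sum_map] at this

theorem euler_product_estimate :
    ∃ C : ℝ, ∀ f : ℕ → ℂ, (∀ m n : ℕ, f (m * n) = f m * f n) → f 1 = 1 →
      (∀ n : ℕ, 1 ≤ n → ‖f n‖ ≤ 1) →
      ∀ δ : ℝ, 0 < δ → δ ≤ 1 / 2 →
        Real.exp ((∑ p ∈ (Finset.Icc 1 ⌊Real.exp (1 / δ)⌋₊).filter Nat.Prime,
              (f p).re / p) - C) ≤
            ‖∑' n : ℕ, f (n + 1) / ((((n : ℝ) + 1) ^ (1 + δ) : ℝ) : ℂ)‖ ∧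
          ‖∑' n : ℕ, f (n + 1) / ((((n : ℝ) + 1) ^ (1 + δ) : ℝ) : ℂ)‖ ≤
            Real.exp ((∑ p ∈ (Finset.Icc 1 ⌊Real.exp (1 / δ)⌋₊).filter Nat.Prime,
              (f p).re / p) + C) := by
  refine ⟨28, fun f hmul hf1 hnorm δ hδ hδ2 => ?_⟩
  let F : ℕ →* ℂ := ⟨⟨f, hf1⟩, hmul⟩
  have hG := F.summable_norm_divRpow hnorm (by linarith : 1 < 1 + δ)
  have hshift : ∑' n : ℕ, f (n + 1) / ((((n : ℝ) + 1) ^ (1 + δ) : ℝ) : ℂ) =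
      ∑' n, F.divRpow (1 + δ) (by positivity) n := by
    rw [hG.of_norm.tsum_eq_zero_add, map_zero, zero_add]
    simp only [MonoidHom.divRpow_apply, Nat.cast_add, Nat.cast_one]
    rfl
  rw [hshift, norm_tsum_eq_exp_tsum_re_neg_log hG]
  have key : |∑' p : Nat.Primes, (-Complex.log (1 - F.divRpow (1 + δ) (by positivity) p)).re -
      ∑ p ∈ Icc 1 ⌊exp (1 / δ)⌋₊ with p.Prime, (f p).re / p| ≤ 28 :=
    abs_tsum_re_neg_log_sub_sum_le F hnorm hδ hδ2
  obtain ⟨hlo, hhi⟩ := abs_le.1 key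
  exact ⟨exp_le_exp.2 (by linarith), exp_le_exp.2 (by linarith)⟩
end

section
/- There exist absolute constants c > 0 and y_0 such that the following holds. Let f : ℕ → ℂ be a completely multiplicative function with |f(n)| ≤ 1 for all n ≥ 1, let y ≥ y_0 be a real number, and set δ := (log log y)/(log y). Then |∑_{n=1}^{∞} f(n)/n^{1+δ}| ≥ c · (log y / log log y) · exp(−D(f,1; y)²). -/
/-!
Write `σ = 1 + δ` and `F(σ) = ∑ f(n) n^{-σ}`. The Euler products give
`|F(σ)| = exp (-∑_p log |1 - f(p) p^{-σ}|)` and `ζ(σ) = exp (-∑_p log (1 - p^{-σ}))`, and for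
`|w| ≤ 1`, `0 ≤ t ≤ 1/2` one has `log |1 - w t| ≤ log (1 - t) + (1 - Re w) t + 12 t²`. Hence
`|F(σ)| ≥ ζ(σ) exp (-∑_p (1 - Re f(p)) p^{-σ} - 12 ∑_p p^{-2σ})`. By telescoping against
`n^{-δ}`, `ζ(σ) ≥ 1/δ`, `∑_p p^{-2σ} ≤ 1`, and the primes `p > y` contribute at most
`2 ∑_{n > y} n^{-σ} ≤ 2 ⌊y⌋^{-δ} / δ ≤ 1`, because `y^{-δ} = 1 / log y`; the primes `p ≤ y`
contribute at most `D(f,1;y)²`. This gives the bound with `c = e^{-13}`.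
-/

open Finset Real Filter Topology

lemma log_norm_one_sub_mul_le {w : ℂ} (hw : ‖w‖ ≤ 1) {t : ℝ} (ht0 : 0 ≤ t) (ht : t ≤ 1 / 2) :
    log ‖1 - w * t‖ ≤ log (1 - t) + ((1 - w.re) * t + 12 * t ^ 2) := by
  have hw2 : w.re * w.re + w.im * w.im ≤ 1 := by
    rw [← Complex.normSq_apply, ← Complex.sq_norm]; nlinarith [norm_nonneg w]
  obtain ⟨hre, hre'⟩ := abs_le.1 ((Complex.abs_re_le_norm w).trans hw)
  have hsq : ‖1 - w * t‖ ^ 2 ≤ (1 - t) ^ 2 * (1 + 2 * ((1 - w.re) * t + 12 * t ^ 2)) := by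
    rw [Complex.sq_norm, Complex.normSq_apply]
    simp only [Complex.sub_re, Complex.sub_im, Complex.mul_re, Complex.mul_im, Complex.one_re,
      Complex.one_im, Complex.ofReal_re, Complex.ofReal_im]
    -- the difference is `t² (4 (1 - 2t)(4 - 3t) + 2 (1 + Re w)(2 - t) + 1 - |w|²)`
    nlinarith [mul_nonneg (mul_nonneg (sq_nonneg t) (by linarith : (0:ℝ) ≤ 1 - 2 * t))
      (by linarith : (0:ℝ) ≤ 4 - 3 * t), mul_nonneg (mul_nonneg (sq_nonneg t)
      (by linarith : (0:ℝ) ≤ 1 + w.re)) (by linarith : (0:ℝ) ≤ 2 - t),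
      mul_nonneg (sq_nonneg t) (by linarith : (0:ℝ) ≤ 1 - (w.re * w.re + w.im * w.im))]
  have hlow : 1 - t ≤ ‖1 - w * t‖ := by
    have : ‖w * t‖ ≤ t := by
      rw [norm_mul, Complex.norm_real, norm_of_nonneg ht0]; nlinarith [norm_nonneg w]
    linarith [norm_sub_norm_le (1 : ℂ) (w * t), norm_one (α := ℂ)]
  set X := (1 - w.re) * t + 12 * t ^ 2
  have hX : 0 ≤ X := by simp only [X]; nlinarith
  have key : 2 * log ‖1 - w * t‖ ≤ 2 * log (1 - t) + 2 * X := by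
    calc 2 * log ‖1 - w * t‖ = log (‖1 - w * t‖ ^ 2) := by rw [log_pow]; norm_num
      _ ≤ log ((1 - t) ^ 2 * (1 + 2 * X)) := log_le_log (by nlinarith) hsq
      _ = 2 * log (1 - t) + log (1 + 2 * X) := by
        rw [log_mul (by nlinarith) (by linarith), log_pow]; norm_num
      _ ≤ 2 * log (1 - t) + 2 * X := by
        linarith [log_le_sub_one_of_pos (by linarith : 0 < 1 + 2 * X)]
  linarith

lemma mul_log_sub_log_mul_rpow_neg_le {a b : ℝ} (ha : 0 < a) (hb : 0 < b) (d : ℝ) :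
    d * (log b - log a) * b ^ (-d) ≤ a ^ (-d) - b ^ (-d) := by
  have h : a ^ (-d) = b ^ (-d) * exp (d * (log b - log a)) := by
    rw [rpow_def_of_pos ha, rpow_def_of_pos hb, ← exp_add]; ring_nf
  rw [h]
  nlinarith [add_one_le_exp (d * (log b - log a)), rpow_pos_of_pos hb (-d)]

lemma mul_rpow_neg_one_sub_le_rpow_neg_sub {x d : ℝ} (hx : 0 < x) (hd : 0 ≤ d) :
    d * (x + 1) ^ (-(1 + d)) ≤ x ^ (-d) - (x + 1) ^ (-d) := by
  have hlog : (x + 1)⁻¹ ≤ log (x + 1) - log x := by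
    rw [← log_div (by positivity) hx.ne']
    have := one_sub_inv_le_log_of_pos (show 0 < (x + 1) / x by positivity)
    rw [inv_div] at this
    convert this using 1
    field_simp; ring
  calc d * (x + 1) ^ (-(1 + d)) = d * (x + 1)⁻¹ * (x + 1) ^ (-d) := by
        rw [neg_add, rpow_add (by positivity), rpow_neg_one]; ring
    _ ≤ d * (log (x + 1) - log x) * (x + 1) ^ (-d) := by gcongr
    _ ≤ x ^ (-d) - (x + 1) ^ (-d) := mul_log_sub_log_mul_rpow_neg_le hx (by positivity) d

lemma rpow_neg_sub_rpow_neg_le_mul {x d : ℝ} (hx : 0 < x) (hd : 0 ≤ d) :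
    x ^ (-d) - (x + 1) ^ (-d) ≤ d * x ^ (-(1 + d)) := by
  have hlog : log (x + 1) - log x ≤ x⁻¹ := by
    rw [← log_div (by positivity) hx.ne']
    have := log_le_sub_one_of_pos (show 0 < (x + 1) / x by positivity)
    convert this using 1
    field_simp; ring
  have := mul_log_sub_log_mul_rpow_neg_le (by positivity : 0 < x + 1) hx d
  calc x ^ (-d) - (x + 1) ^ (-d) ≤ d * (log (x + 1) - log x) * x ^ (-d) := by linarith
    _ ≤ d * x⁻¹ * x ^ (-d) := by gcongr
    _ = d * x ^ (-(1 + d)) := by rw [neg_add, rpow_add hx, rpow_neg_one]; ring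

lemma hasSum_rpow_neg_sub_rpow_neg {b d : ℝ} (hb : 0 < b) (hd : 0 < d) :
    HasSum (fun n : ℕ => ((n : ℝ) + b) ^ (-d) - ((n : ℝ) + b + 1) ^ (-d)) (b ^ (-d)) := by
  have hu : ∀ n : ℕ, ((n : ℝ) + b + 1) = ((n + 1 : ℕ) : ℝ) + b := by intro n; push_cast; ring
  refine (hasSum_iff_tendsto_nat_of_nonneg (fun n => ?_) _).2 ?_
  · have := mul_rpow_neg_one_sub_le_rpow_neg_sub (by positivity : 0 < (n : ℝ) + b) hd.le
    have : 0 ≤ d * ((n : ℝ) + b + 1) ^ (-(1 + d)) := by positivity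
    linarith
  · simp_rw [hu, Finset.sum_range_sub' (fun n : ℕ => ((n : ℝ) + b) ^ (-d))]
    have : Tendsto (fun n : ℕ => ((n : ℝ) + b) ^ (-d)) atTop (𝓝 0) :=
      (tendsto_rpow_neg_atTop hd).comp
        (tendsto_atTop_add_const_right _ b tendsto_natCast_atTop_atTop)
    simpa using (tendsto_const_nhds (x := b ^ (-d))).sub this

lemma tsum_nat_add_rpow_neg_le {b d : ℝ} (hb : 0 < b) (hd : 0 < d) :
    ∑' n : ℕ, ((n : ℝ) + b + 1) ^ (-(1 + d)) ≤ b ^ (-d) / d := by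
  have htel := hasSum_rpow_neg_sub_rpow_neg hb hd
  have hle : ∀ n : ℕ, ((n : ℝ) + b + 1) ^ (-(1 + d)) * d ≤
      ((n : ℝ) + b) ^ (-d) - ((n : ℝ) + b + 1) ^ (-d) := fun n => by
    linarith [mul_rpow_neg_one_sub_le_rpow_neg_sub (by positivity : 0 < (n : ℝ) + b) hd.le]
  have hsum : Summable fun n : ℕ => ((n : ℝ) + b + 1) ^ (-(1 + d)) * d :=
    .of_nonneg_of_le (fun n => by positivity) hle htel.summable
  rw [le_div_iff₀ hd, ← tsum_mul_right, ← htel.tsum_eq]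
  exact hsum.tsum_le_tsum hle htel.summable

lemma one_div_le_tsum_nat_rpow_neg {d : ℝ} (hd : 0 < d) :
    1 / d ≤ ∑' n : ℕ, (n : ℝ) ^ (-(1 + d)) := by
  have htel := hasSum_rpow_neg_sub_rpow_neg one_pos hd
  have hle : ∀ n : ℕ, ((n : ℝ) + 1) ^ (-d) - ((n : ℝ) + 1 + 1) ^ (-d) ≤
      ((n + 1 : ℕ) : ℝ) ^ (-(1 + d)) * d := fun n => by
    push_cast
    linarith [rpow_neg_sub_rpow_neg_le_mul (by positivity : 0 < (n : ℝ) + 1) hd.le]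
  have hsum : Summable fun n : ℕ => (n : ℝ) ^ (-(1 + d)) := summable_nat_rpow.2 (by linarith)
  rw [div_le_iff₀ hd, hsum.tsum_eq_zero_add, Nat.cast_zero, zero_rpow (by linarith), zero_add,
    ← tsum_mul_right]
  calc 1 = ∑' n : ℕ, (((n : ℝ) + 1) ^ (-d) - ((n : ℝ) + 1 + 1) ^ (-d)) := by
        rw [htel.tsum_eq, one_rpow]
    _ ≤ _ := htel.summable.tsum_le_tsum hle (((summable_nat_add_iff 1).2 hsum).mul_right d)

lemma summable_clog_one_sub_primes {g : ℕ →*₀ ℂ} (hg : Summable (‖g ·‖)) :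
    Summable fun p : Nat.Primes => Complex.log (1 - g p) :=
  Summable.clog_one_sub (f := fun p : Nat.Primes => g p)
    (hg.of_norm.comp_injective Subtype.val_injective)

lemma summable_log_norm_one_sub {g : ℕ →*₀ ℂ} (hg : Summable (‖g ·‖)) :
    Summable fun p : Nat.Primes => log ‖1 - g p‖ := by
  simpa only [Complex.reCLM_apply, Complex.log_re] using
    Complex.reCLM.summable (summable_clog_one_sub_primes hg)

lemma norm_tsum_eq_exp_neg_tsum_log_norm {g : ℕ →*₀ ℂ} (hg : Summable (‖g ·‖)) :
    ‖∑' n, g n‖ = exp (-∑' p : Nat.Primes, log ‖1 - g p‖) := by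
  rw [← EulerProduct.exp_tsum_primes_log_eq_tsum hg, Complex.norm_exp,
    Complex.re_tsum (summable_clog_one_sub_primes hg).neg, ← tsum_neg]
  simp [Complex.log_re]

lemma norm_tsum_mul_exp_neg_le_norm_tsum {g h : ℕ →*₀ ℂ} (hg : Summable (‖g ·‖))
    (hh : Summable (‖h ·‖)) {e : Nat.Primes → ℝ} (he : Summable e)
    (hle : ∀ p : Nat.Primes, log ‖1 - g p‖ ≤ log ‖1 - h p‖ + e p) :
    ‖∑' n, h n‖ * exp (-∑' p, e p) ≤ ‖∑' n, g n‖ := by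
  rw [norm_tsum_eq_exp_neg_tsum_log_norm hg, norm_tsum_eq_exp_neg_tsum_log_norm hh, ← exp_add,
    exp_le_exp]
  have hsum := summable_log_norm_one_sub hh
  linarith [(summable_log_norm_one_sub hg).tsum_le_tsum hle (hsum.add he), hsum.tsum_add he]

lemma tsum_primes_le_sum_add_tsum_nat_add {φ : ℕ → ℝ} (hφ : Summable φ) (h0 : ∀ n, 0 ≤ φ n)
    (N : ℕ) :
    ∑' p : Nat.Primes, φ p ≤ ∑ p ∈ (range N).filter Nat.Prime, φ p + ∑' n, φ (n + N) := by
  have hle : ∀ n, (if n.Prime then φ n else 0) ≤ φ n := fun n => by split_ifs <;> simp [h0]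
  have hite : Summable fun n => if n.Prime then φ n else 0 :=
    .of_nonneg_of_le (fun n => by split_ifs <;> simp [h0]) hle hφ
  rw [Nat.Primes.tsum_eq_tsum_ite, ← hite.sum_add_tsum_nat_add N, sum_filter]
  exact add_le_add_right (((summable_nat_add_iff N).2 hite).tsum_le_tsum (fun n => hle _)
    ((summable_nat_add_iff N).2 hφ)) _

lemma abs_re_le_one {f : ℕ → ℂ} (hf : ∀ n, 1 ≤ n → ‖f n‖ ≤ 1) {n : ℕ} (hn : 1 ≤ n) :
    |(f n).re| ≤ 1 :=
  (Complex.abs_re_le_norm _).trans (hf n hn)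

lemma one_sub_re_mul_rpow_neg_nonneg {f : ℕ → ℂ} (hf : ∀ n, 1 ≤ n → ‖f n‖ ≤ 1) {s : ℝ}
    (hs : s ≠ 0) (n : ℕ) :
    0 ≤ (1 - (f n).re) * (n : ℝ) ^ (-s) := by
  rcases Nat.eq_zero_or_pos n with rfl | hn
  · simp [zero_rpow (neg_ne_zero.2 hs)]
  · exact mul_nonneg (by linarith [(abs_le.1 (abs_re_le_one hf hn)).2]) (by positivity)

lemma one_sub_re_mul_rpow_neg_le {f : ℕ → ℂ} (hf : ∀ n, 1 ≤ n → ‖f n‖ ≤ 1) {s : ℝ}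
    (hs : s ≠ 0) (n : ℕ) :
    (1 - (f n).re) * (n : ℝ) ^ (-s) ≤ 2 * (n : ℝ) ^ (-s) := by
  rcases Nat.eq_zero_or_pos n with rfl | hn
  · simp [zero_rpow (neg_ne_zero.2 hs)]
  · exact mul_le_mul_of_nonneg_right (by linarith [(abs_le.1 (abs_re_le_one hf hn)).1])
      (by positivity)

lemma tsum_primes_one_sub_re_mul_rpow_neg_le {f : ℕ → ℂ} (hf : ∀ n, 1 ≤ n → ‖f n‖ ≤ 1)
    {d : ℝ} (hd : 0 < d) {N : ℕ} (hN : 0 < N) :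
    ∑' p : Nat.Primes, (1 - (f p).re) * (p : ℝ) ^ (-(1 + d)) ≤
      ∑ p ∈ (range (N + 1)).filter Nat.Prime, (1 - (f p).re) / p + 2 * (N : ℝ) ^ (-d) / d := by
  have hσ : 1 + d ≠ 0 := by positivity
  have hsum : Summable fun n : ℕ => (n : ℝ) ^ (-(1 + d)) := summable_nat_rpow.2 (by linarith)
  have hφ : Summable fun n : ℕ => (1 - (f n).re) * (n : ℝ) ^ (-(1 + d)) :=
    .of_nonneg_of_le (one_sub_re_mul_rpow_neg_nonneg hf hσ) (one_sub_re_mul_rpow_neg_le hf hσ)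
      (hsum.mul_left 2)
  have hcast : ∀ n : ℕ, ((n + (N + 1) : ℕ) : ℝ) = n + N + 1 := fun n => by push_cast; ring
  refine (tsum_primes_le_sum_add_tsum_nat_add hφ (one_sub_re_mul_rpow_neg_nonneg hf hσ)
    (N + 1)).trans (add_le_add ?_ ?_)
  · refine sum_le_sum fun p hp => ?_
    have hp1 : 1 ≤ p := (mem_filter.1 hp).2.one_lt.le
    rw [div_eq_mul_inv, ← rpow_neg_one]
    exact mul_le_mul_of_nonneg_left (rpow_le_rpow_of_exponent_le (by exact_mod_cast hp1)
      (by linarith)) (by linarith [(abs_le.1 (abs_re_le_one hf hp1)).2])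
  · have htail : Summable fun n : ℕ => ((n : ℝ) + N + 1) ^ (-(1 + d)) :=
      ((summable_nat_add_iff (N + 1)).2 hsum).congr fun n => by rw [hcast]
    calc ∑' n : ℕ, (1 - (f (n + (N + 1))).re) * ((n + (N + 1) : ℕ) : ℝ) ^ (-(1 + d))
        ≤ ∑' n : ℕ, 2 * ((n : ℝ) + N + 1) ^ (-(1 + d)) :=
          ((summable_nat_add_iff (N + 1)).2 hφ).tsum_le_tsum
            (fun n => hcast n ▸ one_sub_re_mul_rpow_neg_le hf hσ _) (htail.mul_left 2)
      _ ≤ 2 * ((N : ℝ) ^ (-d) / d) := by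
          rw [tsum_mul_left]; gcongr; exact tsum_nat_add_rpow_neg_le (by positivity) hd
      _ = 2 * (N : ℝ) ^ (-d) / d := by ring

lemma rpow_neg_one_add_sq {x : ℝ} (hx : 0 ≤ x) (d : ℝ) :
    (x ^ (-(1 + d))) ^ 2 = x ^ (-(1 + (1 + 2 * d))) := by
  rw [← rpow_natCast, ← rpow_mul hx]; ring_nf

lemma tsum_primes_rpow_neg_sq_le {d : ℝ} (hd : 0 ≤ d) :
    ∑' p : Nat.Primes, ((p : ℝ) ^ (-(1 + d))) ^ 2 ≤ 1 := by
  have hsum : Summable fun n : ℕ => (n : ℝ) ^ (-(1 + (1 + 2 * d))) :=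
    summable_nat_rpow.2 (by linarith)
  have hnil : (range 2).filter Nat.Prime = ∅ := by decide
  simp only [rpow_neg_one_add_sq (Nat.cast_nonneg _)]
  calc _ ≤ ∑' n : ℕ, ((n + 2 : ℕ) : ℝ) ^ (-(1 + (1 + 2 * d))) := by
        simpa [hnil] using tsum_primes_le_sum_add_tsum_nat_add hsum (fun n => by positivity) 2
    _ = ∑' n : ℕ, ((n : ℝ) + 1 + 1) ^ (-(1 + (1 + 2 * d))) := by push_cast; ring_nf
    _ ≤ 1 ^ (-(1 + 2 * d)) / (1 + 2 * d) := tsum_nat_add_rpow_neg_le one_pos (by linarith)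
    _ ≤ 1 := by rw [one_rpow, div_le_one (by linarith)]; linarith

-- `hs` makes the map vanish at `0`, as `(0 : ℝ) ^ (0 : ℝ) = 1`.
noncomputable def mulRpowNegHom (f : ℕ →* ℂ) {s : ℝ} (hs : s ≠ 0) : ℕ →*₀ ℂ where
  toFun n := f n * ((n : ℝ) ^ (-s) : ℝ)
  map_zero' := by simp [zero_rpow (neg_ne_zero.2 hs)]
  map_one' := by simp
  map_mul' m n := by
    push_cast [map_mul, mul_rpow (Nat.cast_nonneg m) (Nat.cast_nonneg n)]; ring

lemma mulRpowNegHom_apply (f : ℕ →* ℂ) {s : ℝ} (hs : s ≠ 0) (n : ℕ) :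
    mulRpowNegHom f hs n = f n * ((n : ℝ) ^ (-s) : ℝ) := rfl

lemma summable_norm_mulRpowNegHom {f : ℕ →* ℂ} (hf : ∀ n, 1 ≤ n → ‖f n‖ ≤ 1) {s : ℝ}
    (hs : 1 < s) : Summable (‖mulRpowNegHom f (zero_lt_one.trans hs).ne' ·‖) := by
  refine .of_nonneg_of_le (fun _ => norm_nonneg _) (fun n => ?_)
    (summable_nat_rpow.2 (by linarith : -s < -1))
  rcases Nat.eq_zero_or_pos n with rfl | hn
  · simpa using rpow_nonneg le_rfl _
  · rw [mulRpowNegHom_apply, norm_mul, Complex.norm_real, norm_of_nonneg (by positivity)]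
    exact mul_le_of_le_one_left (by positivity) (hf n hn)

theorem exp_neg_div_le_norm_tsum_mul_rpow_neg {f : ℕ →* ℂ} (hf : ∀ n, 1 ≤ n → ‖f n‖ ≤ 1)
    {d : ℝ} (hd : 0 < d) {N : ℕ} (hN : 0 < N) :
    exp (-(∑ p ∈ (range (N + 1)).filter Nat.Prime, (1 - (f p).re) / p +
        2 * (N : ℝ) ^ (-d) / d + 12)) / d ≤
      ‖∑' n : ℕ, f n * ((n : ℝ) ^ (-(1 + d)) : ℝ)‖ := by
  have hσ : 1 < 1 + d := by linarith
  have hσ0 : 1 + d ≠ 0 := by positivity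
  set t : ℕ → ℝ := fun n => (n : ℝ) ^ (-(1 + d))
  have hsum : Summable t := summable_nat_rpow.2 (by linarith)
  have ht : ∀ p : Nat.Primes, t p ≤ 1 / 2 := fun p => by
    have hp : (2 : ℝ) ≤ p := by exact_mod_cast p.prop.two_le
    calc t p ≤ (p : ℝ) ^ (-1 : ℝ) := rpow_le_rpow_of_exponent_le (by linarith) (by linarith)
      _ ≤ 1 / 2 := by rw [rpow_neg_one, one_div]; exact inv_anti₀ two_pos hp
  have hA : Summable fun p : Nat.Primes => (1 - (f p).re) * t p :=
    (Summable.of_nonneg_of_le (one_sub_re_mul_rpow_neg_nonneg hf (by positivity))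
      (one_sub_re_mul_rpow_neg_le hf (by positivity)) (hsum.mul_left 2)).comp_injective
      Subtype.val_injective
  have hB : Summable fun p : Nat.Primes => t p ^ 2 :=
    ((summable_nat_rpow.2 (by linarith : -(1 + (1 + 2 * d)) < -1)).congr
      fun n => (rpow_neg_one_add_sq (Nat.cast_nonneg n) d).symm).comp_injective
      Subtype.val_injective
  have hpoint : ∀ p : Nat.Primes, log ‖1 - mulRpowNegHom f hσ0 p‖ ≤
      log ‖1 - mulRpowNegHom 1 hσ0 p‖ + ((1 - (f p).re) * t p + 12 * t p ^ 2) := fun p => by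
    rw [mulRpowNegHom_apply, mulRpowNegHom_apply, MonoidHom.one_apply, one_mul,
      ← Complex.ofReal_one, ← Complex.ofReal_sub, Complex.norm_real,
      norm_of_nonneg (by linarith [ht p])]
    exact log_norm_one_sub_mul_le (hf p p.prop.one_lt.le) (by positivity) (ht p)
  have hE : ∑' p : Nat.Primes, ((1 - (f p).re) * t p + 12 * t p ^ 2) ≤
      ∑ p ∈ (range (N + 1)).filter Nat.Prime, (1 - (f p).re) / p + 2 * (N : ℝ) ^ (-d) / d + 12 := by
    rw [hA.tsum_add (hB.mul_left 12), tsum_mul_left]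
    linarith [tsum_primes_one_sub_re_mul_rpow_neg_le hf hd hN, tsum_primes_rpow_neg_sq_le hd.le]
  have hZ : 1 / d ≤ ‖∑' n, mulRpowNegHom 1 hσ0 n‖ := by
    simp only [mulRpowNegHom_apply, MonoidHom.one_apply, one_mul]
    rw [← Complex.ofReal_tsum, Complex.norm_real,
      norm_of_nonneg (tsum_nonneg fun n => by positivity)]
    exact one_div_le_tsum_nat_rpow_neg hd
  refine le_trans ?_ (norm_tsum_mul_exp_neg_le_norm_tsum (summable_norm_mulRpowNegHom hf hσ)
    (summable_norm_mulRpowNegHom (by simp) hσ) (hA.add (hB.mul_left 12)) hpoint)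
  rw [← one_div_mul_eq_div]
  gcongr

lemma tsum_mul_rpow_neg_eq_tsum_succ_div (f : ℕ → ℂ) {s : ℝ} (hs : s ≠ 0) :
    ∑' n : ℕ, f n * ((n : ℝ) ^ (-s) : ℝ) = ∑' n : ℕ, f (n + 1) / ((((n : ℝ) + 1) ^ s : ℝ) : ℂ) := by
  rw [← Nat.succ_injective.tsum_eq]
  · refine tsum_congr fun n => ?_
    rw [Nat.succ_eq_add_one, Nat.cast_add_one, rpow_neg (by positivity), Complex.ofReal_inv,
      div_eq_mul_inv]
  · intro n hn
    refine ⟨n - 1, Nat.succ_pred_eq_of_ne_zero ?_⟩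
    rintro rfl
    simp [zero_rpow (neg_ne_zero.2 hs)] at hn

lemma filter_prime_range_succ_eq (N : ℕ) :
    (range (N + 1)).filter Nat.Prime = (Icc 1 N).filter Nat.Prime := by
  ext p
  simp only [mem_filter, mem_range, mem_Icc, and_congr_left_iff]
  intro hp
  have := hp.one_lt
  omega

lemma two_mul_floor_rpow_neg_div_le_one {y : ℝ} (hy : exp (exp 4) ≤ y) :
    2 * (⌊y⌋₊ : ℝ) ^ (-(log (log y) / log y)) / (log (log y) / log y) ≤ 1 := by
  have hL : exp 4 ≤ log y := by simpa using log_le_log (exp_pos _) hy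
  have hLL : 4 ≤ log (log y) := by simpa using log_le_log (exp_pos _) hL
  have hL0 : 0 < log y := (exp_pos 4).trans_le hL
  set d := log (log y) / log y
  have hd : 0 < d := by positivity
  have hd1 : d ≤ 1 := (div_le_one hL0).2 ((log_le_sub_one_of_pos hL0).trans (by linarith))
  have hy2 : 2 ≤ y := by linarith [add_one_le_exp 4, add_one_le_exp (exp 4)]
  have hy0 : 0 < y := by linarith
  have hyd : y ^ (-d) = (log y)⁻¹ := by
    rw [rpow_def_of_pos hy0, show log y * -d = -log (log y) by simp only [d]; field_simp,
      exp_neg, exp_log hL0]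
  have hfloor : y / 2 ≤ ⌊y⌋₊ := by linarith [Nat.lt_floor_add_one y]
  have h2d : (2 : ℝ) ^ d ≤ 2 := by
    simpa using rpow_le_rpow_of_exponent_le one_le_two hd1
  have hbound : (⌊y⌋₊ : ℝ) ^ (-d) ≤ 2 / log y :=
    calc (⌊y⌋₊ : ℝ) ^ (-d) ≤ (y / 2) ^ (-d) :=
          rpow_le_rpow_of_nonpos (by positivity) hfloor (by linarith)
      _ = y ^ (-d) * 2 ^ d := by
          rw [div_rpow hy0.le zero_le_two, rpow_neg zero_le_two, div_inv_eq_mul]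
      _ ≤ 2 / log y := by rw [hyd, div_eq_inv_mul]; gcongr
  calc 2 * (⌊y⌋₊ : ℝ) ^ (-d) / d ≤ 2 * (2 / log y) / d := by gcongr
    _ = 4 / log (log y) := by simp only [d]; field_simp; ring
    _ ≤ 1 := by rw [div_le_one (by linarith)]; exact hLL

theorem dirichlet_series_lower_bound :
    ∃ c y₀ : ℝ, 0 < c ∧
      ∀ f : ℕ → ℂ, (∀ m n : ℕ, f (m * n) = f m * f n) → f 1 = 1 →
        (∀ n : ℕ, 1 ≤ n → ‖f n‖ ≤ 1) →
        ∀ y : ℝ, y₀ ≤ y →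
          ‖∑' n : ℕ, f (n + 1) /
              ((((n : ℝ) + 1) ^ (1 + Real.log (Real.log y) / Real.log y) : ℝ) : ℂ)‖ ≥
            c * (Real.log y / Real.log (Real.log y)) *
              Real.exp (-(∑ p ∈ (Finset.Icc 1 ⌊y⌋₊).filter Nat.Prime,
                (1 - (f p).re) / p)) := by
  refine ⟨exp (-13), exp (exp 4), exp_pos _, fun f hmul hf1 hf y hy => ?_⟩
  have hL : exp 4 ≤ log y := by simpa using log_le_log (exp_pos _) hy
  have hLL : 4 ≤ log (log y) := by simpa using log_le_log (exp_pos _) hL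
  have hd : 0 < log (log y) / log y := div_pos (by linarith) ((exp_pos 4).trans_le hL)
  have hN : 0 < ⌊y⌋₊ := Nat.floor_pos.2 (by linarith [add_one_le_exp (exp 4), exp_pos 4])
  have key := exp_neg_div_le_norm_tsum_mul_rpow_neg (f := ⟨⟨f, hf1⟩, hmul⟩) hf hd hN
  simp only [MonoidHom.coe_mk, OneHom.coe_mk] at key
  rw [tsum_mul_rpow_neg_eq_tsum_succ_div _ (by positivity), filter_prime_range_succ_eq] at key
  refine le_trans ?_ key
  set D := ∑ p ∈ (Icc 1 ⌊y⌋₊).filter Nat.Prime, (1 - (f p).re) / (p : ℝ)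
  calc exp (-13) * (log y / log (log y)) * exp (-D)
        = exp (-(D + 1 + 12)) / (log (log y) / log y) := by
        rw [div_div_eq_mul_div, show -(D + 1 + 12) = -13 + -D by ring, exp_add]; ring
    _ ≤ _ := by gcongr; exact two_mul_floor_rpow_neg_div_le_one hy
end

section
/- Let χ be an even Dirichlet character modulo q, extended to ℤ via reduction modulo q, and let ψ be a primitive odd Dirichlet character modulo m. Then for every real N ≥ 1, ∑_{b mod m} ψ(b) · (∑_{1 ≤ |n| ≤ N} (χ(n)/n)·e(nb/m)) = 2·τ(ψ)·∑_{n ≤ N} χ(n)·conj(ψ(n))/n, where the outer sum on the left runs over residues b modulo m, the inner sum runs over nonzero integers n with |n| ≤ N, and the sum on the right runs over positive integers n ≤ N. -/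
open Finset

/-- `e(t) = e^{2πit}`. -/
noncomputable def eFun (t : ℝ) : ℂ := Complex.exp (2 * Real.pi * Complex.I * t)

/-- The Gauss sum `τ(ψ) = ∑_{b mod m} ψ(b) e(b/m)`. -/
noncomputable def gaussSumE {m : ℕ} [NeZero m] (ψ : DirichletCharacter ℂ m) : ℂ :=
  ∑ b : ZMod m, ψ b * eFun ((b.val : ℝ) / m)

/-! For primitive `ψ` the twisted Gauss sum `∑_b ψ(b) e(nb/m)` equals `conj ψ(n) · τ(ψ)` for every
integer `n`, including those not coprime to `m` (this is where primitivity enters). The left side is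
therefore `τ(ψ) ∑_{0<|n|≤N} χ(n) conj ψ(n) / n`, and this summand is even in `n` because `χ` is even
while both `ψ` and `1/n` are odd. -/

theorem Finset.sum_Icc_neg_erase_zero {M : Type*} [AddCommMonoid M] (f : ℤ → M) (k : ℕ) :
    ∑ n ∈ (Icc (-(k : ℤ)) k).erase 0, f n = ∑ n ∈ Icc 1 k, (f n + f (-n)) := by
  induction k with
  | zero => simp
  | succ k ih =>
    have hinsert : (Icc (-((k + 1 : ℕ) : ℤ)) (k + 1 : ℕ)).erase 0 =
        insert ((k + 1 : ℕ) : ℤ) (insert (-((k + 1 : ℕ) : ℤ)) ((Icc (-(k : ℤ)) k).erase 0)) := by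
      ext; simp only [mem_erase, mem_Icc, mem_insert]; omega
    rw [hinsert, sum_insert (by simp; omega), sum_insert (by simp), ih,
      sum_Icc_succ_top (by omega), ← add_assoc, add_comm]

theorem Finset.sum_Icc_neg_erase_zero_of_neg_eq {M : Type*} [AddCommMonoid M] {f : ℤ → M}
    (hf : ∀ n, f (-n) = f n) (K : ℤ) :
    ∑ n ∈ (Icc (-K) K).erase 0, f n = 2 • ∑ n ∈ Icc 1 K.toNat, f n := by
  rcases le_or_gt 0 K with hK | hK
  · lift K to ℕ using hK
    simp [sum_Icc_neg_erase_zero, hf, two_nsmul, sum_add_distrib]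
  · simp [Icc_eq_empty_of_lt (by omega : K < -K), Int.toNat_of_nonpos hK.le]

lemma eFun_intCast_div (m : ℕ) [NeZero m] (j : ℤ) :
    eFun ((j : ℝ) / m) = ZMod.stdAddChar (j : ZMod m) := by
  rw [ZMod.stdAddChar_coe, eFun]
  push_cast
  ring_nf

lemma eFun_mul_val_div {m : ℕ} [NeZero m] (n : ℤ) (b : ZMod m) :
    eFun (n * (b.val : ℝ) / m) = ZMod.stdAddChar ((n : ZMod m) * b) := by
  simpa using eFun_intCast_div m (n * b.val)

lemma gaussSumE_eq_gaussSum {m : ℕ} [NeZero m] (ψ : DirichletCharacter ℂ m) :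
    gaussSumE ψ = gaussSum ψ ZMod.stdAddChar := by
  simpa [gaussSumE, gaussSum] using
    sum_congr rfl fun b _ ↦ congrArg (ψ b * ·) (eFun_mul_val_div 1 b)

lemma sum_mul_eFun_mul_div_of_isPrimitive {m : ℕ} [NeZero m] {ψ : DirichletCharacter ℂ m}
    (hψ : ψ.IsPrimitive) (n : ℤ) :
    ∑ b : ZMod m, ψ b * eFun (n * (b.val : ℝ) / m) = star (ψ n) * gaussSumE ψ := by
  simp_rw [eFun_mul_val_div, gaussSumE_eq_gaussSum, MulChar.star_apply',
    ← gaussSum_mulShift_of_isPrimitive _ hψ, gaussSum, AddChar.mulShift_apply]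

lemma even_mul_star_odd_div_neg {q m : ℕ} {χ : DirichletCharacter ℂ q} (hχ : χ.Even)
    {ψ : DirichletCharacter ℂ m} (hψ : ψ.Odd) (n : ℤ) :
    χ ((-n : ℤ) : ZMod q) * star (ψ ((-n : ℤ) : ZMod m)) / ((-n : ℤ) : ℂ) =
      χ (n : ZMod q) * star (ψ (n : ZMod m)) / (n : ℂ) := by
  push_cast
  rw [hχ.eval_neg, hψ.eval_neg, star_neg, mul_neg, neg_div_neg_eq]

theorem twisted_sum_identity_general {q m : ℕ} [NeZero m]
    (χ : DirichletCharacter ℂ q) (hχ : χ.Even)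
    (ψ : DirichletCharacter ℂ m) (hψ : ψ.IsPrimitive) (hψodd : ψ.Odd)
    (N : ℝ) :
    ∑ b : ZMod m, ψ b *
        ∑ n ∈ (Finset.Icc (-⌊N⌋) ⌊N⌋).erase 0,
          (χ (n : ZMod q) / (n : ℂ)) * eFun (n * (b.val : ℝ) / m) =
      2 * gaussSumE ψ *
        ∑ n ∈ Finset.Icc 1 ⌊N⌋₊, χ (n : ZMod q) * star (ψ (n : ZMod m)) / (n : ℂ) := by
  set c : ℤ → ℂ := fun n ↦ χ (n : ZMod q) * star (ψ (n : ZMod m)) / (n : ℂ)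
  calc _ = ∑ n ∈ (Icc (-⌊N⌋) ⌊N⌋).erase 0,
        χ (n : ZMod q) / (n : ℂ) * ∑ b : ZMod m, ψ b * eFun (n * (b.val : ℝ) / m) := by
        simp_rw [mul_sum]
        rw [sum_comm]
        simp_rw [mul_left_comm]
    _ = gaussSumE ψ * ∑ n ∈ (Icc (-⌊N⌋) ⌊N⌋).erase 0, c n := by
        simp_rw [sum_mul_eFun_mul_div_of_isPrimitive hψ, mul_sum, c]
        exact sum_congr rfl fun n _ ↦ by ring
    _ = _ := by
        rw [sum_Icc_neg_erase_zero_of_neg_eq (even_mul_star_odd_div_neg hχ hψodd), Int.floor_toNat,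
          nsmul_eq_mul, Nat.cast_ofNat, mul_left_comm, mul_assoc]
        simp [c]

theorem twisted_sum_identity {q m : ℕ} [NeZero m]
    (χ : DirichletCharacter ℂ q) (hχ : χ.Even)
    (ψ : DirichletCharacter ℂ m) (hψ : ψ.IsPrimitive) (hψodd : ψ.Odd)
    (N : ℝ) (hN : 1 ≤ N) :
    ∑ b : ZMod m, ψ b *
        ∑ n ∈ (Finset.Icc (-⌊N⌋) ⌊N⌋).erase 0,
          (χ (n : ZMod q) / (n : ℂ)) * eFun (n * (b.val : ℝ) / m) =
      2 * gaussSumE ψ *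
        ∑ n ∈ Finset.Icc 1 ⌊N⌋₊, χ (n : ZMod q) * star (ψ (n : ZMod m)) / (n : ℂ) :=
  twisted_sum_identity_general χ hχ ψ hψ hψodd N
end

section
/- There exists an absolute constant c > 0 such that the following holds. Let χ be an even Dirichlet character modulo q, extended to ℤ via reduction modulo q, and let ψ be a primitive odd Dirichlet character modulo m. Then for every real N ≥ 1, max_{θ ∈ [0,1]} |∑_{1 ≤ |n| ≤ N} (χ(n)/n)·e(nθ)| ≥ c · (√m/φ(m)) · |∑_{n ≤ N} χ(n)·conj(ψ(n))/n|. -/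
open Finset

/-!
Sample `S(θ) = ∑_{1 ≤ |n| ≤ N} χ(n) n⁻¹ e(nθ)` at `θ = a/m` and twist by `ψ(a)`. For primitive `ψ`,
`∑_a ψ(a) e(na/m) = τ(ψ) ψ̄(n)`, so `∑_a ψ(a) S(a/m) = τ(ψ) ∑_{1 ≤ |n| ≤ N} χ(n) ψ̄(n)/n`; as `χ` is
even and `ψ` odd, this summand is even in `n`, and the sum is `2 τ(ψ) ∑_{n ≤ N} χ(n) ψ̄(n)/n`.
Since `|τ(ψ)| = √m` and `∑_a |ψ(a)| = φ(m)`, the triangle inequality gives the theorem with `c = 2`.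
-/

open ZMod

lemma norm_eFun (t : ℝ) : ‖eFun t‖ = 1 := by
  rw [eFun, show 2 * Real.pi * Complex.I * t = ((2 * Real.pi * t : ℝ) : ℂ) * Complex.I by
    push_cast; ring, Complex.norm_exp_ofReal_mul_I]

lemma ZMod.stdAddChar_mul_intCast {N : ℕ} [NeZero N] (a : ZMod N) (n : ℤ) :
    stdAddChar (a * (n : ZMod N)) = eFun (n * (a.val / N)) := by
  have ha : ((a.val * n : ℤ) : ZMod N) = a * n := by push_cast; simp [ZMod.natCast_val]
  rw [← ha, stdAddChar_coe, eFun]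
  congr 1
  push_cast
  ring

lemma ZMod.dft_star {N : ℕ} [NeZero N] (Φ : ZMod N → ℂ) (k : ZMod N) :
    𝓕 (fun j ↦ star (Φ j)) k = star (𝓕 Φ (-k)) := by
  simp only [dft_apply, smul_eq_mul, star_sum, star_mul', mul_neg, neg_neg]
  refine sum_congr rfl fun j _ ↦ ?_
  rw [AddChar.map_neg_eq_conj]
  rfl

namespace DirichletCharacter

variable {N : ℕ} [NeZero N] {χ : DirichletCharacter ℂ N}

/-- Fourier inversion `𝓕 (𝓕 χ) = N • χ (-·)`, applied to `𝓕 χ = τ • χ̄ (-·)`. -/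
lemma IsPrimitive.gaussSum_mul_star (hχ : χ.IsPrimitive) :
    gaussSum χ stdAddChar * star (gaussSum χ stdAddChar) = N := by
  have hdft : 𝓕 χ = fun k ↦ gaussSum χ stdAddChar * star (χ (-k)) := by
    ext k
    rw [hχ.fourierTransform_eq_inv_mul_gaussSum, MulChar.star_apply', mul_comm]
  have h := congr_fun (dft_dft (χ : ZMod N → ℂ)) (-1)
  rw [hdft, dft_const_mul, dft_comp_neg (fun k ↦ star (χ k))] at h
  simp only [dft_star, hχ.fourierTransform_eq_inv_mul_gaussSum] at h
  simpa using h

lemma IsPrimitive.norm_gaussSum (hχ : χ.IsPrimitive) :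
    ‖gaussSum χ stdAddChar‖ = Real.sqrt N := by
  have h := hχ.gaussSum_mul_star
  rw [← starRingEnd_apply, Complex.mul_conj, Complex.normSq_eq_norm_sq] at h
  rw [← Real.sqrt_sq (norm_nonneg _)]
  exact congrArg Real.sqrt (by exact_mod_cast h)

lemma IsPrimitive.sum_mul_eFun (hχ : χ.IsPrimitive) (n : ℤ) :
    ∑ a : ZMod N, χ a * eFun (n * (a.val / N)) = gaussSum χ stdAddChar * star (χ n) := by
  have h := hχ.fourierTransform_eq_inv_mul_gaussSum (-(n : ZMod N))
  rw [dft_apply, neg_neg, ← MulChar.star_apply'] at h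
  rw [mul_comm, ← h]
  refine sum_congr rfl fun a _ ↦ ?_
  rw [mul_neg, neg_neg, smul_eq_mul, mul_comm, stdAddChar_mul_intCast]

lemma IsPrimitive.sum_mul_sum_eFun (hχ : χ.IsPrimitive) (A : Finset ℤ) (c : ℤ → ℂ) :
    ∑ a : ZMod N, χ a * ∑ n ∈ A, c n * eFun (n * (a.val / N)) =
      gaussSum χ stdAddChar * ∑ n ∈ A, c n * star (χ n) := calc
  _ = ∑ n ∈ A, c n * ∑ a : ZMod N, χ a * eFun (n * (a.val / N)) := by
    simp only [mul_sum]
    rw [sum_comm]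
    exact sum_congr rfl fun n _ ↦ sum_congr rfl fun a _ ↦ by ring
  _ = _ := by
    simp only [hχ.sum_mul_eFun, mul_sum]
    exact sum_congr rfl fun n _ ↦ by ring

lemma sum_norm_eq_totient (χ : DirichletCharacter ℂ N) : ∑ a, ‖χ a‖ = N.totient := by
  have h a : ‖χ a‖ = (1 : MulChar (ZMod N) ℝ) a := by
    by_cases ha : IsUnit a
    · rw [MulChar.one_apply ha, ← ha.unit_spec, χ.unit_norm_eq_one]
    · rw [χ.map_nonunit ha, MulChar.map_nonunit _ ha, norm_zero]
  classical
  rw [sum_congr rfl fun a _ ↦ h a, MulChar.sum_one_eq_card_units, ZMod.card_units_eq_totient]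

lemma norm_sum_mul_le_totient_mul (χ : DirichletCharacter ℂ N) {g : ZMod N → ℂ} {B : ℝ}
    (hg : ∀ a, ‖g a‖ ≤ B) : ‖∑ a, χ a * g a‖ ≤ N.totient * B := calc
  ‖∑ a, χ a * g a‖ ≤ ∑ a, ‖χ a‖ * B := by
    refine (norm_sum_le _ _).trans (sum_le_sum fun a _ ↦ ?_)
    rw [norm_mul]
    exact mul_le_mul_of_nonneg_left (hg a) (norm_nonneg _)
  _ = N.totient * B := by rw [← sum_mul, sum_norm_eq_totient]

end DirichletCharacter

lemma le_ciSup₂_mem {α β : Type*} [ConditionallyCompleteLattice α] {f : β → α} {s : Set β}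
    (hf : BddAbove (Set.range f)) {x : β} (hx : x ∈ s) : f x ≤ ⨆ y ∈ s, f y :=
  le_ciSup₂ (f := fun y (_ : y ∈ s) ↦ f y)
    (hf.mono <| Set.iUnion_subset fun y ↦ Set.range_subset_iff.mpr fun _ ↦ Set.mem_range_self y)
    x hx

lemma Int.sum_erase_zero_Icc_of_even {M : Type*} [AddCommMonoid M] {f : ℤ → M}
    (hf : ∀ n, f (-n) = f n) (K : ℕ) :
    ∑ n ∈ (Icc (-(K : ℤ)) K).erase 0, f n = 2 • ∑ n ∈ Icc 1 K, f n := by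
  induction K with
  | zero => simp
  | succ K ih =>
    have hset : (Icc (-((K + 1 : ℕ) : ℤ)) (K + 1 : ℕ)).erase 0 =
        insert ((K : ℤ) + 1) (insert (-((K : ℤ) + 1)) ((Icc (-(K : ℤ)) K).erase 0)) := by
      ext n; simp only [mem_erase, mem_Icc, mem_insert]; omega
    rw [hset, sum_insert (by simp; omega), sum_insert (by simp), ih, hf,
      sum_Icc_succ_top (by omega)]
    push_cast
    abel

theorem max_exp_sum_ge_twisted_sum :
    ∃ c : ℝ, 0 < c ∧
      ∀ (q m : ℕ) (χ : DirichletCharacter ℂ q) (ψ : DirichletCharacter ℂ m),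
        χ.Even → ψ.IsPrimitive → ψ.Odd →
        ∀ N : ℝ, 1 ≤ N →
          (⨆ θ ∈ Set.Icc (0 : ℝ) 1,
              ‖∑ n ∈ (Finset.Icc (-⌊N⌋) ⌊N⌋).erase 0,
                (χ (n : ZMod q) / (n : ℂ)) * eFun (n * θ)‖) ≥
            c * (Real.sqrt m / (Nat.totient m)) *
              ‖∑ n ∈ Finset.Icc 1 ⌊N⌋₊,
                χ (n : ZMod q) * star (ψ (n : ZMod m)) / (n : ℂ)‖ := by
  refine ⟨2, two_pos, fun q m χ ψ hχ hψ hψodd N hN ↦ ?_⟩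
  set S : ℝ → ℂ := fun θ ↦ ∑ n ∈ (Icc (-⌊N⌋) ⌊N⌋).erase 0, (χ n / (n : ℂ)) * eFun (n * θ)
  set T := ∑ n ∈ Icc 1 ⌊N⌋₊, χ n * star (ψ n) / (n : ℂ) with hT
  have hS_bdd : BddAbove (Set.range fun θ ↦ ‖S θ‖) := by
    refine ⟨∑ n ∈ (Icc (-⌊N⌋) ⌊N⌋).erase 0, ‖χ n / (n : ℂ)‖, ?_⟩
    rintro _ ⟨θ, rfl⟩
    refine (norm_sum_le _ _).trans (sum_le_sum fun n _ ↦ ?_)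
    rw [norm_mul, norm_eFun, mul_one]
  rcases eq_or_ne m 0 with rfl | hm
  · simpa using Real.iSup_nonneg fun θ ↦ Real.iSup_nonneg fun _ ↦ norm_nonneg (S θ)
  have : NeZero m := ⟨hm⟩
  have hsample : ∑ a : ZMod m, ψ a * S (a.val / m) = gaussSum ψ stdAddChar * (2 * T) := by
    rw [hψ.sum_mul_sum_eFun, ← Int.natCast_floor_eq_floor (by linarith),
      Int.sum_erase_zero_Icc_of_even, two_nsmul, two_mul]
    · push_cast
      simp only [hT, mul_div_right_comm]
    · intro n
      push_cast
      rw [hχ.eval_neg, hψodd.eval_neg, star_neg, div_neg, neg_mul_neg]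
  have hbound := ψ.norm_sum_mul_le_totient_mul (g := fun a ↦ S (a.val / m))
    (B := ⨆ θ ∈ Set.Icc (0 : ℝ) 1, ‖S θ‖) fun a ↦ le_ciSup₂_mem hS_bdd ⟨by positivity,
      div_le_one_of_le₀ (by exact_mod_cast (ZMod.val_lt a).le) (Nat.cast_nonneg m)⟩
  rw [hsample, norm_mul, hψ.norm_gaussSum, norm_mul, Complex.norm_two] at hbound
  have hφ : (0 : ℝ) < m.totient := mod_cast Nat.totient_pos.mpr (Nat.pos_of_ne_zero hm)
  rw [ge_iff_le, mul_div_assoc', div_mul_eq_mul_div, div_le_iff₀ hφ]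
  linarith
end
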